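/- arXiv:2508.08813 — 2 statements merged into one kernel-verified Lean document; each statement's English description precedes it below -/
import Mathlib

section
/- For every real exponent r ∈ (1, 2] and every ε > 0 there exists a constant c_{r,ε} > 0 such that for all real numbers a, b satisfying |a − b| ≥ ε·min{|a|, |b|}, one has sgn(a − b)·(|a|^{r−2}·a − |b|^{r−2}·b) ≥ c_{r,ε}·|a − b|^{r−1}. -/
open Real

/-- Core monotonicity estimate: for `0 ≤ x ≤ y ≤ M`,
`(r-1) M^(r-2) (y - x) ≤ y^(r-1) - x^(r-1)`. -/
lemma rpow_sub_ge (r : ℝ) (hr1 : 1 < r) (hr2 : r ≤ 2) {M x y : ℝ}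
    (hM : 0 < M) (hx : 0 ≤ x) (hxy : x ≤ y) (hyM : y ≤ M) :
    (r - 1) * M ^ (r - 2) * (y - x) ≤ y ^ (r - 1) - x ^ (r - 1) := by
  set K : ℝ := (r - 1) * M ^ (r - 2) with hK
  set g : ℝ → ℝ := fun t => t ^ (r - 1) - K * t with hg
  have hcont : ContinuousOn g (Set.Icc x y) := by
    apply ContinuousOn.sub
    · exact fun t _ => (Real.continuousAt_rpow_const t (r - 1)
        (Or.inr (by linarith))).continuousWithinAt
    · exact (continuous_const.mul continuous_id).continuousOn
  have hderiv : ∀ t ∈ interior (Set.Icc x y), HasDerivAt g ((r - 1) * t ^ (r - 2) - K) t := by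
    intro t ht
    rw [interior_Icc] at ht
    have ht0 : 0 < t := lt_of_le_of_lt hx ht.1
    have h1 : HasDerivAt (fun t : ℝ => t ^ (r - 1)) ((r - 1) * t ^ (r - 1 - 1)) t :=
      Real.hasDerivAt_rpow_const (Or.inl ht0.ne')
    have h2 : HasDerivAt (fun t : ℝ => K * t) K t := by
      simpa using (hasDerivAt_id t).const_mul K
    have := h1.sub h2
    have he : r - 1 - 1 = r - 2 := by ring
    rw [he] at this
    exact this
  have hmono : MonotoneOn g (Set.Icc x y) := by
    apply monotoneOn_of_deriv_nonneg (convex_Icc x y) hcont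
    · intro t ht
      exact (hderiv t ht).differentiableAt.differentiableWithinAt
    · intro t ht
      rw [(hderiv t ht).deriv]
      rw [interior_Icc] at ht
      have ht0 : 0 < t := lt_of_le_of_lt hx ht.1
      have htM : t ≤ M := le_trans ht.2.le hyM
      have : M ^ (r - 2) ≤ t ^ (r - 2) :=
        Real.rpow_le_rpow_of_nonpos ht0 htM (by linarith)
      have hr1' : (0:ℝ) < r - 1 := by linarith
      rw [hK]
      nlinarith
  have := hmono (Set.left_mem_Icc.mpr hxy) (Set.right_mem_Icc.mpr hxy) hxy
  simp only [hg] at this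
  linarith

/-- `|t|^(r-2) * t = t^(r-1)` for `t ≥ 0`. -/
lemma phi_eq (r : ℝ) (hr1 : 1 < r) {t : ℝ} (ht : 0 ≤ t) :
    |t| ^ (r - 2) * t = t ^ (r - 1) := by
  rcases eq_or_lt_of_le ht with h | h
  · rw [← h]
    simp [Real.zero_rpow (show r - 1 ≠ 0 by linarith)]
  · rw [abs_of_pos h]
    rw [show r - 1 = (r - 2) + 1 by ring, Real.rpow_add_one h.ne']

/-- Key pointwise inequality: for `b ≤ a`,
`(r-1)(|a|+|b|)^(r-2) (a-b) ≤ φ(a) - φ(b)` where `φ(t) = |t|^(r-2) t`. -/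
lemma phi_sub_ge (r : ℝ) (hr1 : 1 < r) (hr2 : r ≤ 2) {a b : ℝ} (hba : b < a) :
    (r - 1) * (|a| + |b|) ^ (r - 2) * (a - b) ≤
      |a| ^ (r - 2) * a - |b| ^ (r - 2) * b := by
  have hM : 0 < |a| + |b| := by
    rcases eq_or_ne a 0 with ha | ha
    · have hb : b ≠ 0 := by rintro rfl; exact absurd ha (by linarith [hba])
      have := abs_pos.mpr hb
      nlinarith [abs_nonneg a]
    · have := abs_pos.mpr ha
      nlinarith [abs_nonneg b]
  rcases le_or_gt 0 b with hb0 | hb0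
  · -- 0 ≤ b < a
    have ha0 : 0 ≤ a := le_of_lt (lt_of_le_of_lt hb0 hba)
    rw [phi_eq r hr1 ha0, phi_eq r hr1 hb0]
    exact rpow_sub_ge r hr1 hr2 hM hb0 hba.le
      (by rw [abs_of_nonneg ha0]; linarith [abs_nonneg b])
  · rcases le_or_gt a 0 with ha0 | ha0
    · -- b < a ≤ 0
      have h1 : |a| ^ (r - 2) * a = -((-a) ^ (r - 1)) := by
        rw [← phi_eq r hr1 (show (0:ℝ) ≤ -a by linarith), abs_neg]; ring
      have h2 : |b| ^ (r - 2) * b = -((-b) ^ (r - 1)) := by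
        rw [← phi_eq r hr1 (show (0:ℝ) ≤ -b by linarith), abs_neg]; ring
      rw [h1, h2]
      have key := rpow_sub_ge r hr1 hr2 hM (show (0:ℝ) ≤ -a by linarith)
        (show -a ≤ -b by linarith)
        (by rw [abs_of_nonpos ha0, abs_of_nonpos hb0.le]; linarith)
      linarith
    · -- b < 0 < a
      have h1 : |a| ^ (r - 2) * a = a ^ (r - 1) := phi_eq r hr1 ha0.le
      have h2 : |b| ^ (r - 2) * b = -((-b) ^ (r - 1)) := by
        rw [← phi_eq r hr1 (show (0:ℝ) ≤ -b by linarith), abs_neg]; ring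
      rw [h1, h2]
      have k1 := rpow_sub_ge r hr1 hr2 hM le_rfl ha0.le
        (by rw [abs_of_pos ha0]; linarith [abs_nonneg b])
      have k2 := rpow_sub_ge r hr1 hr2 hM le_rfl (show (0:ℝ) ≤ -b by linarith)
        (by rw [abs_of_neg hb0]; linarith [abs_nonneg a])
      rw [Real.zero_rpow (show r - 1 ≠ 0 by linarith)] at k1 k2
      linarith

lemma key_ineq (r : ℝ) (hr1 : 1 < r) (hr2 : r ≤ 2) (ε : ℝ) (hε : 0 < ε)
    {a b : ℝ} (hba : b < a) (hcond : |a - b| ≥ ε * min |a| |b|) :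
    (r - 1) * ((ε + 2) / ε) ^ (r - 2) * |a - b| ^ (r - 1) ≤
      |a| ^ (r - 2) * a - |b| ^ (r - 2) * b := by
  have hs : 0 < a - b := sub_pos.mpr hba
  have habs : |a - b| = a - b := abs_of_pos hs
  have hM : 0 < |a| + |b| := by nlinarith [le_abs_self a, neg_abs_le b]
  have hmin : ε * min |a| |b| ≤ a - b := habs ▸ hcond
  have h1 : |a| ≤ |b| + (a - b) := by
    have h := abs_add_le b (a - b)
    have he : b + (a - b) = a := by ring
    rw [he, habs] at h; linarith
  have h2 : |b| ≤ |a| + (a - b) := by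
    have h := abs_add_le a (b - a)
    have he : a + (b - a) = b := by ring
    rw [he, abs_sub_comm, habs] at h; linarith
  have hub : ε * (|a| + |b|) ≤ (ε + 2) * (a - b) := by
    rcases le_total |a| |b| with h | h
    · rw [min_eq_left h] at hmin; nlinarith
    · rw [min_eq_right h] at hmin; nlinarith
  have hC : 0 < (ε + 2) / ε := by positivity
  have hM_le : |a| + |b| ≤ (ε + 2) / ε * (a - b) := by
    rw [div_mul_eq_mul_div, le_div_iff₀ hε]; nlinarith
  have hpow : ((ε + 2) / ε * (a - b)) ^ (r - 2) ≤ (|a| + |b|) ^ (r - 2) :=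
    Real.rpow_le_rpow_of_nonpos hM hM_le (by linarith)
  have hsplit : ((ε + 2) / ε * (a - b)) ^ (r - 2) =
      ((ε + 2) / ε) ^ (r - 2) * (a - b) ^ (r - 2) :=
    Real.mul_rpow hC.le hs.le
  rw [hsplit] at hpow
  have hpow2 : (a - b) ^ (r - 1) = (a - b) ^ (r - 2) * (a - b) := by
    rw [show r - 1 = (r - 2) + 1 by ring, Real.rpow_add_one hs.ne']
  have hphi := phi_sub_ge r hr1 hr2 hba
  have h3 := mul_le_mul_of_nonneg_right hpow
    (le_of_lt (mul_pos (show (0:ℝ) < r - 1 by linarith) hs))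
  rw [habs, hpow2]
  nlinarith [h3, hphi]

/-- Proposition 2.2 (sixth inequality): for every `r ∈ (1, 2]` and every `ε > 0` there
is a constant `c_{r,ε} > 0` such that for all reals `a, b` with
`|a - b| ≥ ε · min{|a|, |b|}`, one has
`sgn(a - b)(|a|^(r-2) a - |b|^(r-2) b) ≥ c_{r,ε} |a - b|^(r-1)`. -/
theorem duality_sixth_inequality (r : ℝ) (hr1 : 1 < r) (hr2 : r ≤ 2)
    (ε : ℝ) (hε : 0 < ε) :
    ∃ c : ℝ, 0 < c ∧ ∀ a b : ℝ, |a - b| ≥ ε * min |a| |b| →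
      Real.sign (a - b) * (|a| ^ (r - 2) * a - |b| ^ (r - 2) * b) ≥
        c * |a - b| ^ (r - 1) := by
  refine ⟨(r - 1) * ((ε + 2) / ε) ^ (r - 2), ?_, ?_⟩
  · exact mul_pos (by linarith) (Real.rpow_pos_of_pos (by positivity) _)
  intro a b hcond
  rcases lt_trichotomy a b with h | h | h
  · rw [Real.sign_of_neg (sub_neg.mpr h)]
    have hcond' : |b - a| ≥ ε * min |b| |a| := by
      rwa [abs_sub_comm, min_comm]
    have := key_ineq r hr1 hr2 ε hε h hcond'
    rw [abs_sub_comm] at this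
    linarith
  · subst h
    simp [Real.zero_rpow (show r - 1 ≠ 0 by linarith)]
  · rw [Real.sign_of_pos (sub_pos.mpr h)]
    have := key_ineq r hr1 hr2 ε hε h hcond
    linarith
end

section
/- Let λ ∈ [2, ∞) and k ≥ 0. Then there exists a constant C₀ > 0, depending only on λ, such that for all real numbers a₁, a₂, b₁, b₂, writing A := a₁ − a₂ and B := b₁ − b₂, one has (|A|^{λ−2}·A − |B|^{λ−2}·B)·(T_k(a₁ − b₁) − T_k(a₂ − b₂)) ≥ C₀·|T_k(a₁ − b₁) − T_k(a₂ − b₂)|^λ. -/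
/-- The truncation `T_k(t) := sgn(t) · max(|t| - k, 0)`. -/
noncomputable def trunc (k t : ℝ) : ℝ := Real.sign t * max (|t| - k) 0

private lemma trunc_eq (k : ℝ) (hk : 0 ≤ k) (t : ℝ) :
    trunc k t = max (t - k) 0 + min (t + k) 0 := by
  rcases lt_trichotomy t 0 with ht | ht | ht
  · rw [trunc, Real.sign_of_neg ht, abs_of_neg ht]
    simp only [max_def, min_def]
    split_ifs <;> linarith
  · subst ht
    rw [trunc, Real.sign_zero, zero_mul, zero_sub, zero_add,
        max_eq_right (neg_nonpos.mpr hk), min_eq_right hk, add_zero]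
  · rw [trunc, Real.sign_of_pos ht, abs_of_pos ht]
    simp only [max_def, min_def]
    split_ifs <;> linarith

private lemma trunc_mono_lip {k : ℝ} (hk : 0 ≤ k) {s t : ℝ} (h : t ≤ s) :
    0 ≤ trunc k s - trunc k t ∧ trunc k s - trunc k t ≤ s - t := by
  rw [trunc_eq k hk s, trunc_eq k hk t]
  constructor <;>
  · rw [max_def, max_def, min_def, min_def]
    split_ifs <;> linarith

private lemma mul_self_rpow {x p : ℝ} (hx : 0 ≤ x) (hp : 0 < p) :
    x * x ^ (p - 1) = x ^ p := by
  rcases eq_or_lt_of_le hx with h | h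
  · rw [← h, Real.zero_rpow hp.ne', zero_mul]
  · nth_rewrite 1 [← Real.rpow_one x]
    rw [← Real.rpow_add h]
    ring_nf

private lemma superadd {x y p : ℝ} (hx : 0 ≤ x) (hy : 0 ≤ y) (hp : 1 ≤ p) :
    x ^ p + y ^ p ≤ (x + y) ^ p := by
  have hp0 : (0:ℝ) < p := by linarith
  have hxy : 0 ≤ x + y := by linarith
  have h1 : x ^ p ≤ x * (x + y) ^ (p - 1) := by
    rw [← mul_self_rpow hx hp0]
    exact mul_le_mul_of_nonneg_left
      (Real.rpow_le_rpow hx (by linarith) (by linarith)) hx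
  have h2 : y ^ p ≤ y * (x + y) ^ (p - 1) := by
    rw [← mul_self_rpow hy hp0]
    exact mul_le_mul_of_nonneg_left
      (Real.rpow_le_rpow hy (by linarith) (by linarith)) hy
  calc x ^ p + y ^ p ≤ x * (x + y) ^ (p - 1) + y * (x + y) ^ (p - 1) := by linarith
    _ = (x + y) * (x + y) ^ (p - 1) := by ring
    _ = (x + y) ^ p := mul_self_rpow hxy hp0

/-- For nonneg `a`, `|a|^(lam-2) * a = a^(lam-1)`. -/
private lemma phi_nonneg {lam : ℝ} (hlam : 2 ≤ lam) {a : ℝ} (ha : 0 ≤ a) :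
    |a| ^ (lam - 2) * a = a ^ (lam - 1) := by
  rcases eq_or_lt_of_le ha with h | h
  · rw [← h, mul_zero, Real.zero_rpow (by linarith)]
  · rw [abs_of_pos h]
    nth_rewrite 2 [← Real.rpow_one a]
    rw [← Real.rpow_add h]
    ring_nf

private lemma key_ineq_s12 {lam : ℝ} (hlam : 2 ≤ lam) {a b : ℝ} (hab : b ≤ a) :
    (2:ℝ) ^ (-lam) * (a - b) ^ (lam - 1) ≤
      |a| ^ (lam - 2) * a - |b| ^ (lam - 2) * b := by
  have hp : (1:ℝ) ≤ lam - 1 := by linarith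
  have hc1 : (2:ℝ) ^ (-lam) ≤ 1 :=
    Real.rpow_le_one_of_one_le_of_nonpos one_le_two (by linarith)
  have hc0 : (0:ℝ) < (2:ℝ) ^ (-lam) := Real.rpow_pos_of_pos two_pos _
  rcases le_or_gt 0 b with hb | hb
  · -- 0 ≤ b ≤ a
    have ha : 0 ≤ a := le_trans hb hab
    rw [phi_nonneg hlam ha, phi_nonneg hlam hb]
    have h1 : b ^ (lam - 1) + (a - b) ^ (lam - 1) ≤ a ^ (lam - 1) := by
      have := superadd hb (by linarith : (0:ℝ) ≤ a - b) hp
      rwa [add_sub_cancel] at this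
    have h2 : (2:ℝ) ^ (-lam) * (a - b) ^ (lam - 1) ≤ (a - b) ^ (lam - 1) := by
      nth_rewrite 2 [← one_mul ((a - b) ^ (lam - 1))]
      exact mul_le_mul_of_nonneg_right hc1 (Real.rpow_nonneg (by linarith) _)
    linarith
  · rcases le_or_gt a 0 with ha | ha
    · -- b ≤ a ≤ 0 : reflect
      have hb' : (0:ℝ) ≤ -a := by linarith
      have hab' : -a ≤ -b := by linarith
      have h1 : (-b) ^ (lam - 1) - (-a) ^ (lam - 1)
          = |a| ^ (lam - 2) * a - |b| ^ (lam - 2) * b := by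
        rw [← phi_nonneg hlam (by linarith : (0:ℝ) ≤ -b),
            ← phi_nonneg hlam hb', abs_neg, abs_neg]
        ring
      rw [← h1]
      have h2 : (-a) ^ (lam - 1) + ((-b) - (-a)) ^ (lam - 1) ≤ (-b) ^ (lam - 1) := by
        have := superadd hb' (by linarith : (0:ℝ) ≤ (-b) - (-a)) hp
        rwa [add_sub_cancel] at this
      have h3 : ((-b) - (-a)) = a - b := by ring
      rw [h3] at h2
      have h4 : (2:ℝ) ^ (-lam) * (a - b) ^ (lam - 1) ≤ (a - b) ^ (lam - 1) := by
        nth_rewrite 2 [← one_mul ((a - b) ^ (lam - 1))]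
        exact mul_le_mul_of_nonneg_right hc1 (Real.rpow_nonneg (by linarith) _)
      have h5 : (0:ℝ) ≤ (-a) ^ (lam - 1) := Real.rpow_nonneg hb' _
      linarith
    · -- b < 0 < a
      have hbn : (0:ℝ) ≤ -b := by linarith
      have h1 : |a| ^ (lam - 2) * a - |b| ^ (lam - 2) * b
          = a ^ (lam - 1) + (-b) ^ (lam - 1) := by
        rw [phi_nonneg hlam ha.le, ← phi_nonneg hlam hbn, abs_neg]
        ring
      rw [h1]
      -- (a - b)^(lam-1) ≤ 2^(lam-1) * (a^(lam-1) + (-b)^(lam-1)) via max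
      set m := max a (-b) with hm
      have hmn : 0 ≤ m := le_trans ha.le (le_max_left _ _)
      have hab2 : a - b ≤ 2 * m := by
        have := le_max_left a (-b); have := le_max_right a (-b); cases le_total a (-b) <;> simp [hm] <;> linarith
      have h2 : (a - b) ^ (lam - 1) ≤ (2 * m) ^ (lam - 1) :=
        Real.rpow_le_rpow (by linarith) hab2 (by linarith)
      have h3 : (2 * m) ^ (lam - 1) = 2 ^ (lam - 1) * m ^ (lam - 1) :=
        Real.mul_rpow (by norm_num) hmn
      have h4 : m ^ (lam - 1) ≤ a ^ (lam - 1) + (-b) ^ (lam - 1) := by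
        rcases max_cases a (-b) with ⟨h, _⟩ | ⟨h, _⟩ <;> rw [hm, h]
        · have : (0:ℝ) ≤ (-b) ^ (lam - 1) := Real.rpow_nonneg hbn _
          linarith
        · have : (0:ℝ) ≤ a ^ (lam - 1) := Real.rpow_nonneg ha.le _
          linarith
      have h5 : (2:ℝ) ^ (-lam) * (2:ℝ) ^ (lam - 1) = 2⁻¹ := by
        rw [← Real.rpow_add two_pos]
        have he : -lam + (lam - 1) = -1 := by ring
        rw [he, Real.rpow_neg_one]
      calc (2:ℝ) ^ (-lam) * (a - b) ^ (lam - 1)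
          ≤ (2:ℝ) ^ (-lam) * ((2:ℝ) ^ (lam - 1) * m ^ (lam - 1)) := by
            rw [← h3]; exact mul_le_mul_of_nonneg_left h2 hc0.le
        _ = 2⁻¹ * m ^ (lam - 1) := by rw [← mul_assoc, h5]
        _ ≤ a ^ (lam - 1) + (-b) ^ (lam - 1) := by
            have h6 : (0:ℝ) ≤ m ^ (lam - 1) := Real.rpow_nonneg hmn _
            linarith

private lemma main_aux (lam : ℝ) (hlam : 2 ≤ lam) (k : ℝ) (hk : 0 ≤ k)
    (a₁ a₂ b₁ b₂ : ℝ) (hord : a₂ - b₂ ≤ a₁ - b₁) :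
    (|a₁ - a₂| ^ (lam - 2) * (a₁ - a₂) - |b₁ - b₂| ^ (lam - 2) * (b₁ - b₂)) *
        (trunc k (a₁ - b₁) - trunc k (a₂ - b₂)) ≥
      (2:ℝ) ^ (-lam) * |trunc k (a₁ - b₁) - trunc k (a₂ - b₂)| ^ lam := by
  obtain ⟨hT0, hTle⟩ := trunc_mono_lip hk hord
  set T := trunc k (a₁ - b₁) - trunc k (a₂ - b₂) with hT
  have hAB : b₁ - b₂ ≤ a₁ - a₂ := by linarith
  have hkey := key_ineq_s12 hlam hAB
  have hDiff : (a₁ - a₂) - (b₁ - b₂) = (a₁ - b₁) - (a₂ - b₂) := by ring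
  have hTle' : T ≤ (a₁ - a₂) - (b₁ - b₂) := by rw [hDiff]; linarith
  have hc0 : (0:ℝ) < (2:ℝ) ^ (-lam) := Real.rpow_pos_of_pos two_pos _
  have habs : |T| = T := abs_of_nonneg hT0
  rw [habs]
  have h1 : T ^ (lam - 1) ≤ ((a₁ - a₂) - (b₁ - b₂)) ^ (lam - 1) :=
    Real.rpow_le_rpow hT0 hTle' (by linarith)
  have h2 : T ^ lam = T * T ^ (lam - 1) := (mul_self_rpow hT0 (by linarith)).symm
  calc (2:ℝ) ^ (-lam) * T ^ lam
      = ((2:ℝ) ^ (-lam) * T ^ (lam - 1)) * T := by rw [h2]; ring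
    _ ≤ ((2:ℝ) ^ (-lam) * ((a₁ - a₂) - (b₁ - b₂)) ^ (lam - 1)) * T := by
        exact mul_le_mul_of_nonneg_right
          (mul_le_mul_of_nonneg_left h1 hc0.le) hT0
    _ ≤ (|a₁ - a₂| ^ (lam - 2) * (a₁ - a₂) - |b₁ - b₂| ^ (lam - 2) * (b₁ - b₂)) * T :=
        mul_le_mul_of_nonneg_right hkey hT0

/-- Lemma 4.1 (f), pointwise: for `λ ∈ [2, ∞)` and `k ≥ 0`, there is a constant
`C₀ > 0` depending only on `λ` such that for all reals `a₁, a₂, b₁, b₂`, writing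
`A := a₁ - a₂` and `B := b₁ - b₂`,
`(|A|^(λ-2) A - |B|^(λ-2) B)(T_k(a₁ - b₁) - T_k(a₂ - b₂)) ≥ C₀ |T_k(a₁ - b₁) - T_k(a₂ - b₂)|^λ`. -/
theorem trunc_coercive_pairing_diff (lam : ℝ) (hlam : 2 ≤ lam) (k : ℝ) (hk : 0 ≤ k) :
    ∃ C₀ : ℝ, 0 < C₀ ∧ ∀ a₁ a₂ b₁ b₂ : ℝ,
      (|a₁ - a₂| ^ (lam - 2) * (a₁ - a₂) - |b₁ - b₂| ^ (lam - 2) * (b₁ - b₂)) *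
          (trunc k (a₁ - b₁) - trunc k (a₂ - b₂)) ≥
        C₀ * |trunc k (a₁ - b₁) - trunc k (a₂ - b₂)| ^ lam := by
  refine ⟨(2:ℝ) ^ (-lam), Real.rpow_pos_of_pos two_pos _, fun a₁ a₂ b₁ b₂ => ?_⟩
  rcases le_total (a₂ - b₂) (a₁ - b₁) with hord | hord
  · exact main_aux lam hlam k hk a₁ a₂ b₁ b₂ hord
  · have h := main_aux lam hlam k hk a₂ a₁ b₂ b₁ hord
    have e1 : |a₂ - a₁| = |a₁ - a₂| := abs_sub_comm _ _
    have e2 : |b₂ - b₁| = |b₁ - b₂| := abs_sub_comm _ _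
    have e3 : |trunc k (a₂ - b₂) - trunc k (a₁ - b₁)|
        = |trunc k (a₁ - b₁) - trunc k (a₂ - b₂)| := abs_sub_comm _ _
    rw [e1, e2, e3] at h
    have e4 : (|a₁ - a₂| ^ (lam - 2) * (a₂ - a₁) - |b₁ - b₂| ^ (lam - 2) * (b₂ - b₁)) *
        (trunc k (a₂ - b₂) - trunc k (a₁ - b₁))
        = (|a₁ - a₂| ^ (lam - 2) * (a₁ - a₂) - |b₁ - b₂| ^ (lam - 2) * (b₁ - b₂)) *
        (trunc k (a₁ - b₁) - trunc k (a₂ - b₂)) := by ring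
    rwa [e4] at h
end
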